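/- Let V be a random vector in ℝ^k such that E[VV'] exists and is nonsingular. Then for every sequence (γ_n) in ℝ^k with ‖γ_n‖ → ∞, there exist a point v* in the support of the distribution of V and a subsequence (γ_{n_l}) such that |γ_{n_l}'v*| → ∞ as l → ∞. -/

import Mathlib

open MeasureTheory Filter

noncomputable section

namespace MVR

/-- Lower endpoint of the scale-function domain: `zero` codes `a = 0`, `negInf` codes `a = -∞`. -/
inductive LB | zero | negInf

/-- The domain `(a, ∞)` of the scale function. -/
def LB.dom : LB → Set ℝ
  | LB.zero => Set.Ioi 0
  | LB.negInf => Set.univ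

/-- The filter "t → a from within the domain". -/
def LB.atLB : LB → Filter ℝ
  | LB.zero => nhdsWithin 0 (Set.Ioi 0)
  | LB.negInf => Filter.atBot

/-- Assumption 1: the scale function `s : (a,∞) → (0,∞)` is three times differentiable,
strictly increasing, convex, with `s(t) → 0` as `t → a` and `s(t) → ∞` as `t → ∞`. -/
structure IsScale (A : LB) (s : ℝ → ℝ) : Prop where
  pos : ∀ t ∈ A.dom, 0 < s t
  smooth : ContDiffOn ℝ 3 s A.dom
  mono : StrictMonoOn s A.dom
  convex : ConvexOn ℝ A.dom s
  tendsto_lb : Filter.Tendsto s A.atLB (nhds 0)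
  tendsto_top : Filter.Tendsto s Filter.atTop Filter.atTop

/-- Euclidean inner product on `ℝ^k`. -/
def mdot {k : ℕ} (x y : Fin k → ℝ) : ℝ := ∑ i, x i * y i

/-- Euclidean norm on `ℝ^k`. -/
def ednorm {k : ℕ} (x : Fin k → ℝ) : ℝ := Real.sqrt (∑ i, (x i) ^ 2)

/-- Euclidean norm on `ℝ^k × ℝ^k`. -/
def pnorm {k : ℕ} (θ : (Fin k → ℝ) × (Fin k → ℝ)) : ℝ :=
  Real.sqrt (∑ i, (θ.1 i) ^ 2 + ∑ i, (θ.2 i) ^ 2)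

/-- The vector `(g, 0, …, 0) ∈ ℝ^k`. -/
def lsγ {k : ℕ} [NeZero k] (g : ℝ) : Fin k → ℝ := fun i => if i = 0 then g else 0

/-- Topological support of a measure: points all of whose neighbourhoods have positive measure. -/
def measSupport {α : Type*} [TopologicalSpace α] [MeasurableSpace α] (μ : Measure α) : Set α :=
  {x | ∀ U ∈ nhds x, μ U ≠ 0}

/-- Standard Gaussian density `φ`. -/
def gaussD (z : ℝ) : ℝ := (Real.sqrt (2 * Real.pi))⁻¹ * Real.exp (-(z ^ 2) / 2)

/-- The MVR setting: a probability space carrying `(Y, X)` with `X` having intercept `1`,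
together with a scale function satisfying Assumption 1. -/
structure Setting (k : ℕ) [NeZero k] (Ω : Type*) [MeasurableSpace Ω] where
  P : Measure Ω
  isProb : IsProbabilityMeasure P
  Y : Ω → ℝ
  X : Ω → Fin k → ℝ
  measY : Measurable Y
  measX : Measurable X
  intercept : ∀ᵐ ω ∂P, X ω 0 = 1
  A : LB
  s : ℝ → ℝ
  scale : IsScale A s

namespace Setting

variable {k : ℕ} [NeZero k] {Ω : Type*} [MeasurableSpace Ω] (S : Setting k Ω)

/-- First derivative of the scale function. -/
def s1 : ℝ → ℝ := deriv S.s

/-- Second derivative of the scale function. -/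
def s2 : ℝ → ℝ := deriv (deriv S.s)

/-- Third derivative of the scale function. -/
def s3 : ℝ → ℝ := deriv (deriv (deriv S.s))

/-- The parameter set `Θ_γ = {γ : P[s(X'γ) > 0] = 1}`. -/
def Tγ : Set (Fin k → ℝ) := {γ | ∀ᵐ ω ∂S.P, 0 < S.s (mdot (S.X ω) γ)}

/-- The parameter space `Θ = ℝ^k × Θ_γ`. -/
def T : Set ((Fin k → ℝ) × (Fin k → ℝ)) := Set.univ ×ˢ S.Tγ

/-- Standardized residual `e(Y,X,θ) = (Y − X'β)/s(X'γ)`. -/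
def e (θ : (Fin k → ℝ) × (Fin k → ℝ)) (ω : Ω) : ℝ :=
  (S.Y ω - mdot (S.X ω) θ.1) / S.s (mdot (S.X ω) θ.2)

/-- The MVR loss `L(X,Y,θ) = (1/2){e(Y,X,θ)² + 1}·s(X'γ)`. -/
def L (θ : (Fin k → ℝ) × (Fin k → ℝ)) (ω : Ω) : ℝ :=
  (1 / 2) * ((S.e θ ω) ^ 2 + 1) * S.s (mdot (S.X ω) θ.2)

/-- The MVR objective `Q(θ) = E[L(X,Y,θ)]`. -/
def Q (θ : (Fin k → ℝ) × (Fin k → ℝ)) : ℝ := ∫ ω, S.L θ ω ∂S.P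

/-- The σ-algebra generated by `X`. -/
def mX : MeasurableSpace Ω := MeasurableSpace.comap S.X inferInstance

/-- Conditional mean function `μ(X) = E[Y | X]` (as a function of `ω`). -/
def condMean : Ω → ℝ := S.P[S.Y | S.mX]

/-- Conditional variance function `σ(X)² = E[(Y − E[Y|X])² | X]` (as a function of `ω`). -/
def condVar : Ω → ℝ := S.P[fun ω => (S.Y ω - S.condMean ω) ^ 2 | S.mX]

/-- Conditional standard deviation `σ(X)`. -/
def condSD (ω : Ω) : ℝ := Real.sqrt (S.condVar ω)

/-- Assumption 2: `σ(X)²` is bounded away from `0` (almost surely) on the support of `X`. -/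
def Assm2 : Prop := ∃ c : ℝ, 0 < c ∧ ∀ᵐ ω ∂S.P, c ≤ S.condVar ω

/-- Assumption 3: the moment conditions. -/
def Assm3 : Prop :=
  Integrable (fun ω => (S.Y ω) ^ 4) S.P ∧
  Integrable (fun ω => (ednorm (S.X ω)) ^ 4) S.P ∧
  ∀ γ ∈ S.Tγ,
    Integrable (fun ω => (ednorm (S.X ω)) ^ 4 * (S.s2 (mdot (S.X ω) γ)) ^ 2) S.P ∧
    Integrable (fun ω => (ednorm (S.X ω)) ^ 6 * (S.s3 (mdot (S.X ω) γ)) ^ 2) S.P ∧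
    Integrable (fun ω =>
      (ednorm (S.X ω)) ^ 6 * (S.s1 (mdot (S.X ω) γ)) ^ 2 * (S.s2 (mdot (S.X ω) γ)) ^ 2) S.P

/-- The matrix `E[XX'/s(X'γ)]`. -/
def M (γ : Fin k → ℝ) : Matrix (Fin k) (Fin k) ℝ :=
  Matrix.of fun i j => ∫ ω, S.X ω i * S.X ω j / S.s (mdot (S.X ω) γ) ∂S.P

/-- Assumption 4: `E[XX'/s(X'γ)]` is nonsingular for all `γ ∈ Θ_γ`. -/
def Assm4 : Prop := ∀ γ ∈ S.Tγ, (S.M γ).det ≠ 0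

/-- The restricted (constant-scale) MVR objective defining OLS. -/
def QLS (β : Fin k → ℝ) (g : ℝ) : ℝ :=
  ∫ ω, (1 / 2) * (((S.Y ω - mdot (S.X ω) β) / S.s g) ^ 2 + 1) * S.s g ∂S.P

/-- `(β, g)` is the OLS solution: it minimizes the constant-scale MVR objective over
`Θ_LS = ℝ^k × {g : s(g) > 0}`. -/
def IsOLS (β : Fin k → ℝ) (g : ℝ) : Prop :=
  0 < S.s g ∧ ∀ β' : Fin k → ℝ, ∀ g' : ℝ, 0 < S.s g' → S.QLS β g ≤ S.QLS β' g'

/-- `θ` is the unique minimizer of the MVR objective `Q` over `Θ`. -/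
def IsMVRmin (θ : (Fin k → ℝ) × (Fin k → ℝ)) : Prop :=
  θ ∈ S.T ∧ ∀ θ' ∈ S.T, θ' ≠ θ → S.Q θ < S.Q θ'

/-- The scale function is specified as `s(t) = t` or `s(t) = exp(t)`. -/
def LinOrExp : Prop := (∀ t, S.s t = t) ∨ (∀ t, S.s t = Real.exp t)

/-- The scaled Gaussian density `f_θ(Y,X) = φ(e(Y,X,θ))/s(X'γ)`. -/
def fdens (θ : (Fin k → ℝ) × (Fin k → ℝ)) (ω : Ω) : ℝ :=
  gaussD (S.e θ ω) / S.s (mdot (S.X ω) θ.2)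

/-- The GLS reference density `f†_β(Y,X) = φ((Y−X'β)/σ(X))/σ(X)`. -/
def fdagger (β : Fin k → ℝ) (ω : Ω) : ℝ :=
  gaussD ((S.Y ω - mdot (S.X ω) β) / S.condSD ω) / S.condSD ω

/-- The infeasible MVR objective written in terms of `μ(X)` and `σ(X)²`. -/
def Qtilde (θ : (Fin k → ℝ) × (Fin k → ℝ)) : ℝ :=
  (1 / 2) * ∫ ω, (((S.condMean ω - mdot (S.X ω) θ.1) / S.s (mdot (S.X ω) θ.2)) ^ 2 + 1) *
      S.s (mdot (S.X ω) θ.2) ∂S.P +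
  (1 / 2) * ∫ ω, S.condVar ω / S.s (mdot (S.X ω) θ.2) ∂S.P

/-- The block matrix `Ψ(θ)` of Lemma 2. -/
def Psi (θ : (Fin k → ℝ) × (Fin k → ℝ)) : Matrix (Fin k ⊕ Fin k) (Fin k ⊕ Fin k) ℝ :=
  Matrix.fromBlocks
    (Matrix.of fun i j => ∫ ω, S.X ω i * S.X ω j / S.s (mdot (S.X ω) θ.2) ∂S.P)
    (Matrix.of fun i j => ∫ ω,
      S.X ω i * S.X ω j * S.s1 (mdot (S.X ω) θ.2) * S.e θ ω / S.s (mdot (S.X ω) θ.2) ∂S.P)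
    (Matrix.of fun i j => ∫ ω,
      S.X ω i * S.X ω j * S.s1 (mdot (S.X ω) θ.2) * S.e θ ω / S.s (mdot (S.X ω) θ.2) ∂S.P)
    (Matrix.of fun i j => ∫ ω,
      S.X ω i * S.X ω j * (S.s1 (mdot (S.X ω) θ.2) * S.e θ ω) ^ 2 / S.s (mdot (S.X ω) θ.2) ∂S.P)

end Setting

end MVR

open MVR MVR.Setting

/-!
Normalise: by compactness of the unit sphere, a subsequence of `γ_n / ‖γ_n‖` converges to a
unit vector `w`. If `w'v = 0` for every `v` in the support, then `w'V = 0` almost surely (the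
support of a measure on `ℝ^k` is conull), so `E[VV'] w = E[V (V'w)] = 0`, contradicting
nonsingularity. Hence some support point `v` has `w'v ≠ 0`, and along the subsequence
`|γ_n'v| = ‖γ_n‖ · |(γ_n / ‖γ_n‖)'v| → ∞` since `|(γ_n / ‖γ_n‖)'v| → |w'v| > 0`.
-/

theorem measSupport_eq_support {α : Type*} [TopologicalSpace α] [MeasurableSpace α]
    (μ : Measure α) : measSupport μ = μ.support := by
  ext x
  simp [measSupport, Measure.mem_support_iff_forall, pos_iff_ne_zero]

theorem mdot_eq_dotProduct {k : ℕ} (x y : Fin k → ℝ) : mdot x y = x ⬝ᵥ y := rfl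

theorem ednorm_eq_norm_toLp {k : ℕ} (x : Fin k → ℝ) : ednorm x = ‖WithLp.toLp 2 x‖ := by
  simp [ednorm, EuclideanSpace.norm_eq]

section Directions

variable {E : Type*} [NormedAddCommGroup E] [NormedSpace ℝ E]

theorem exists_subseq_tendsto_inv_norm_smul [ProperSpace E] {x : ℕ → E}
    (hx : Tendsto (fun n => ‖x n‖) atTop atTop) :
    ∃ w, ‖w‖ = 1 ∧ ∃ φ : ℕ → ℕ, StrictMono φ ∧
      Tendsto (fun l => ‖x (φ l)‖⁻¹ • x (φ l)) atTop (nhds w) := by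
  have hsphere : ∀ᶠ n in atTop, ‖x n‖⁻¹ • x n ∈ Metric.sphere (0 : E) 1 := by
    filter_upwards [hx.eventually_gt_atTop 0] with n hn
    rw [mem_sphere_zero_iff_norm, norm_smul, norm_inv, norm_norm, inv_mul_cancel₀ hn.ne']
  obtain ⟨w, hw, φ, hφ, hlim⟩ := (isCompact_sphere 0 1).tendsto_subseq' hsphere.frequently
  exact ⟨w, mem_sphere_zero_iff_norm.1 hw, φ, hφ, hlim⟩

theorem tendsto_abs_apply_atTop_of_tendsto_inv_norm_smul {α : Type*} {l : Filter α}
    {x : α → E} (hx : Tendsto (fun n => ‖x n‖) l atTop) {w : E}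
    (hw : Tendsto (fun n => ‖x n‖⁻¹ • x n) l (nhds w)) (f : E →L[ℝ] ℝ) (hf : f w ≠ 0) :
    Tendsto (fun n => |f (x n)|) l atTop := by
  have hlim : Tendsto (fun n => |f (‖x n‖⁻¹ • x n)|) l (nhds |f w|) :=
    ((continuous_abs.comp f.continuous).tendsto w).comp hw
  refine (hx.atTop_mul_pos (abs_pos.2 hf) hlim).congr' ?_
  filter_upwards [hx.eventually_gt_atTop 0] with n hn
  rw [map_smul, smul_eq_mul, abs_mul, abs_inv, abs_norm, mul_inv_cancel_left₀ hn.ne']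

end Directions

section SecondMoment

open scoped Matrix

variable {ι Ω : Type*} [Fintype ι] [MeasurableSpace Ω]

def secondMomentMatrix (P : Measure Ω) (V : Ω → ι → ℝ) : Matrix ι ι ℝ :=
  Matrix.of fun i j => ∫ ω, V ω i * V ω j ∂P

theorem secondMomentMatrix_mulVec_eq_zero {P : Measure Ω} {V : Ω → ι → ℝ}
    (hint : ∀ i j, Integrable (fun ω => V ω i * V ω j) P) {w : ι → ℝ}
    (hw : ∀ᵐ ω ∂P, w ⬝ᵥ V ω = 0) : secondMomentMatrix P V *ᵥ w = 0 := by
  ext i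
  calc (secondMomentMatrix P V *ᵥ w) i = ∫ ω, ∑ j, V ω i * V ω j * w j ∂P := by
        rw [integral_finsetSum _ fun j _ => (hint i j).mul_const _]
        simp only [Matrix.mulVec, dotProduct, secondMomentMatrix, Matrix.of_apply,
          integral_mul_const]
    _ = 0 := by
        refine integral_eq_zero_of_ae (hw.mono fun ω hω => ?_)
        simp only [← Finset.mul_sum, mul_assoc, Pi.zero_apply]
        rw [← dotProduct, dotProduct_comm, hω, mul_zero]

theorem exists_mem_support_dotProduct_ne_zero [DecidableEq ι] {P : Measure Ω}
    {V : Ω → ι → ℝ} (hV : Measurable V) (hint : ∀ i j, Integrable (fun ω => V ω i * V ω j) P)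
    (hnonsing : (secondMomentMatrix P V).det ≠ 0) {w : ι → ℝ} (hw : w ≠ 0) :
    ∃ v ∈ (P.map V).support, w ⬝ᵥ v ≠ 0 := by
  have hpos : 0 < P.map V {v | w ⬝ᵥ v ≠ 0} := by
    refine pos_iff_ne_zero.2 fun hnull => hw ?_
    have hae : ∀ᵐ ω ∂P, w ⬝ᵥ V ω = 0 :=
      ae_of_ae_map hV.aemeasurable (p := fun v => w ⬝ᵥ v = 0) (by simpa [ae_iff] using hnull)
    exact Matrix.eq_zero_of_mulVec_eq_zero hnonsing (secondMomentMatrix_mulVec_eq_zero hint hae)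
  obtain ⟨v, hwv, hv⟩ := Measure.nonempty_inter_support_of_pos hpos
  exact ⟨v, hv, hwv⟩

end SecondMoment

theorem stmt_9_general {k : ℕ} {Ω : Type*} [MeasurableSpace Ω] (P : Measure Ω)
    (V : Ω → Fin k → ℝ) (hV : Measurable V)
    (hint : ∀ i j, Integrable (fun ω => V ω i * V ω j) P)
    (hnonsing : (Matrix.of fun i j => ∫ ω, V ω i * V ω j ∂P).det ≠ 0)
    (γ : ℕ → Fin k → ℝ)
    (hγ : Filter.Tendsto (fun n => ednorm (γ n)) Filter.atTop Filter.atTop) :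
    ∃ v ∈ measSupport (P.map V), ∃ φ : ℕ → ℕ, StrictMono φ ∧
      Filter.Tendsto (fun l => |mdot (γ (φ l)) v|) Filter.atTop Filter.atTop := by
  simp only [ednorm_eq_norm_toLp] at hγ
  obtain ⟨w, hw, φ, hφ, hlim⟩ := exists_subseq_tendsto_inv_norm_smul hγ
  have hw0 : w.ofLp ≠ 0 := (WithLp.ofLp_eq_zero 2).not.2 (norm_ne_zero_iff.1 (hw ▸ one_ne_zero))
  obtain ⟨v, hv, hwv⟩ := exists_mem_support_dotProduct_ne_zero hV hint hnonsing hw0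
  refine ⟨v, by rwa [measSupport_eq_support], φ, hφ, ?_⟩
  have hinner : ∀ x : Fin k → ℝ, innerSL ℝ (WithLp.toLp 2 v) (WithLp.toLp 2 x) = mdot x v :=
    fun x => by simp [EuclideanSpace.inner_eq_star_dotProduct, mdot_eq_dotProduct]
  have hγφ := hγ.comp hφ.tendsto_atTop
  have hdiverge := tendsto_abs_apply_atTop_of_tendsto_inv_norm_smul hγφ hlim
    (innerSL ℝ (WithLp.toLp 2 v)) (by rwa [← WithLp.toLp_ofLp 2 w, hinner, mdot_eq_dotProduct])
  simpa only [Function.comp_def, hinner] using hdiverge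

/-- Lemma 1: if `E[VV']` is nonsingular, then for every sequence `γ_n` with `‖γ_n‖ → ∞` there
exist a support point `v*` of the distribution of `V` and a subsequence along which
`|γ_n'v*| → ∞`. -/
theorem stmt_9 {k : ℕ} {Ω : Type*} [MeasurableSpace Ω] (P : Measure Ω)
    [IsProbabilityMeasure P] (V : Ω → Fin k → ℝ) (hV : Measurable V)
    (hint : ∀ i j, Integrable (fun ω => V ω i * V ω j) P)
    (hnonsing : (Matrix.of fun i j => ∫ ω, V ω i * V ω j ∂P).det ≠ 0)
    (γ : ℕ → Fin k → ℝ)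
    (hγ : Filter.Tendsto (fun n => ednorm (γ n)) Filter.atTop Filter.atTop) :
    ∃ v ∈ measSupport (P.map V), ∃ φ : ℕ → ℕ, StrictMono φ ∧
      Filter.Tendsto (fun l => |mdot (γ (φ l)) v|) Filter.atTop Filter.atTop :=
  stmt_9_general P V hV hint hnonsing γ hγ
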